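/- For every t>0 and S>0, the gamma of the Black–Scholes formula is ∂_{SS} 𝓑𝓢(t,S) = e^{−(r−r_R)t} φ(ζ₁)/(S σ √t), where φ(x) = (1/√(2π)) e^{−x²/2} is the standard normal density; consequently, for each fixed t>0, lim_{S→∞} ∂_{SS} 𝓑𝓢(t,S) = 0, i.e. the linearity (vanishing second derivative) boundary condition holds in the limit S → ∞. -/

import Mathlib

/-- Standard normal cumulative distribution function. -/
noncomputable def Phi (x : ℝ) : ℝ :=
  (Real.sqrt (2 * Real.pi))⁻¹ * ∫ u in Set.Iic x, Real.exp (-u ^ 2 / 2)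

/-- `ζ₁ = (log(S/K) + (r_R + σ²/2)t)/(σ√t)`. -/
noncomputable def zeta1 (σ K r_R t S : ℝ) : ℝ :=
  (Real.log (S / K) + (r_R + σ ^ 2 / 2) * t) / (σ * Real.sqrt t)

/-- `ζ₂ = ζ₁ − σ√t`. -/
noncomputable def zeta2 (σ K r_R t S : ℝ) : ℝ :=
  zeta1 σ K r_R t S - σ * Real.sqrt t

/-- The Black–Scholes formula
`𝓑𝓢(t,S) = α S e^{−(r−r_R)t} Φ(αζ₁) − α K e^{−rt} Φ(αζ₂)` (t = time to maturity). -/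
noncomputable def BS (σ K r r_R α t S : ℝ) : ℝ :=
  α * S * Real.exp (-(r - r_R) * t) * Phi (α * zeta1 σ K r_R t S)
    - α * K * Real.exp (-r * t) * Phi (α * zeta2 σ K r_R t S)

/-- Standard normal density `φ(x) = (1/√(2π)) e^{−x²/2}`. -/
noncomputable def phi (x : ℝ) : ℝ :=
  (Real.sqrt (2 * Real.pi))⁻¹ * Real.exp (-x ^ 2 / 2)

/-!
Differentiating `𝓑𝓢` in `S`, the two chain-rule terms through `ζ₁` and `ζ₂` cancel by the
identity `S e^{−(r−r_R)t} φ(ζ₁) = K e^{−rt} φ(ζ₂)`, which comes from completing the square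
`ζ₂² = ζ₁² − 2(log(S/K) + r_R t)`. Hence the delta is `α e^{−(r−r_R)t} Φ(αζ₁)`, and one more
chain rule gives the gamma. As `S → ∞`, `ζ₁ → ∞`, so `φ(ζ₁) → 0`, while `1/S → 0`.
-/

open Real MeasureTheory Filter Set Topology

lemma hasDerivAt_integral_Iic {E : Type*} [NormedAddCommGroup E] [NormedSpace ℝ E]
    [CompleteSpace E] {f : ℝ → E} (hf : Integrable f) {x : ℝ} (hx : ContinuousAt f x) :
    HasDerivAt (fun y => ∫ u in Iic y, f u) (f x) x := by
  have hsplit : (fun y => ∫ u in Iic y, f u)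
      = fun y => (∫ u in Iic 0, f u) + ∫ u in (0 : ℝ)..y, f u := by
    funext y
    rw [← intervalIntegral.integral_Iic_sub_Iic hf.integrableOn hf.integrableOn,
      add_sub_cancel]
  rw [hsplit]
  exact (intervalIntegral.integral_hasDerivAt_right hf.intervalIntegrable
    hf.aestronglyMeasurable.stronglyMeasurableAtFilter hx).const_add _

lemma integrable_exp_neg_sq_div_two : Integrable fun u : ℝ => exp (-u ^ 2 / 2) := by
  convert integrable_exp_neg_mul_sq (b := 1 / 2) (by norm_num) using 3
  ring

lemma hasDerivAt_Phi (x : ℝ) : HasDerivAt Phi (phi x) x :=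
  (hasDerivAt_integral_Iic integrable_exp_neg_sq_div_two
    (by fun_prop : Continuous fun u : ℝ => exp (-u ^ 2 / 2)).continuousAt).const_mul _

lemma phi_mul_of_sq_eq_one {α : ℝ} (hα : α ^ 2 = 1) (x : ℝ) : phi (α * x) = phi x := by
  simp only [phi, mul_pow, hα, one_mul]

lemma tendsto_phi_atTop : Tendsto phi atTop (𝓝 0) := by
  have hexponent : Tendsto (fun x : ℝ => -x ^ 2 / 2) atTop atBot :=
    (tendsto_neg_atBot_iff.2 (tendsto_pow_atTop two_ne_zero)).atBot_div_const two_pos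
  rw [← mul_zero (√(2 * π))⁻¹]
  exact (tendsto_exp_atBot.comp hexponent).const_mul _

section Zeta

variable {σ K r_R t S : ℝ}

lemma hasDerivAt_zeta1 (hK : K ≠ 0) (hS : S ≠ 0) :
    HasDerivAt (zeta1 σ K r_R t) (S⁻¹ / (σ * √t)) S := by
  have hlog : HasDerivAt (fun s => log (s / K)) S⁻¹ S := by
    refine (((hasDerivAt_id' S).div_const K).log (div_ne_zero hS hK)).congr_deriv ?_
    field_simp
  exact (hlog.add_const _).div_const _

lemma hasDerivAt_zeta2 (hK : K ≠ 0) (hS : S ≠ 0) :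
    HasDerivAt (zeta2 σ K r_R t) (S⁻¹ / (σ * √t)) S :=
  (hasDerivAt_zeta1 hK hS).sub_const _

lemma zeta2_sq (hσ : σ ≠ 0) (ht : 0 < t) :
    zeta2 σ K r_R t S ^ 2 = zeta1 σ K r_R t S ^ 2 - 2 * (log (S / K) + r_R * t) := by
  have hζ : zeta1 σ K r_R t S * (σ * √t) = log (S / K) + (r_R + σ ^ 2 / 2) * t :=
    div_mul_cancel₀ _ (mul_ne_zero hσ (sqrt_pos.2 ht).ne')
  rw [zeta2]
  linear_combination (-2) * hζ + σ ^ 2 * sq_sqrt ht.le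

lemma phi_zeta2 (hσ : σ ≠ 0) (hK : 0 < K) (ht : 0 < t) (hS : 0 < S) :
    phi (zeta2 σ K r_R t S) = S / K * exp (r_R * t) * phi (zeta1 σ K r_R t S) := by
  have hexponent : -(zeta1 σ K r_R t S ^ 2 - 2 * (log (S / K) + r_R * t)) / 2
      = log (S / K) + r_R * t + -zeta1 σ K r_R t S ^ 2 / 2 := by ring
  rw [phi, phi, zeta2_sq hσ ht, hexponent, exp_add, exp_add, exp_log (div_pos hS hK)]
  ring

lemma tendsto_zeta1_atTop (hσ : 0 < σ) (hK : 0 < K) (ht : 0 < t) :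
    Tendsto (zeta1 σ K r_R t) atTop atTop :=
  (tendsto_atTop_add_const_right _ _
    (tendsto_log_atTop.comp (tendsto_id.atTop_div_const hK))).atTop_div_const
    (mul_pos hσ (sqrt_pos.2 ht))

end Zeta

section BlackScholes

variable {σ K r r_R α t S : ℝ}

lemma hasDerivAt_BS (hσ : σ ≠ 0) (hK : 0 < K) (hα : α ^ 2 = 1) (ht : 0 < t) (hS : 0 < S) :
    HasDerivAt (BS σ K r r_R α t)
      (α * exp (-(r - r_R) * t) * Phi (α * zeta1 σ K r_R t S)) S := by
  set d := S⁻¹ / (σ * √t)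
  have hΦ₁ : HasDerivAt (fun s => Phi (α * zeta1 σ K r_R t s))
      (phi (zeta1 σ K r_R t S) * (α * d)) S := by
    rw [← phi_mul_of_sq_eq_one hα]
    exact (hasDerivAt_Phi _).comp S ((hasDerivAt_zeta1 hK.ne' hS.ne').const_mul α)
  have hΦ₂ : HasDerivAt (fun s => Phi (α * zeta2 σ K r_R t s))
      (phi (zeta2 σ K r_R t S) * (α * d)) S := by
    rw [← phi_mul_of_sq_eq_one hα]
    exact (hasDerivAt_Phi _).comp S ((hasDerivAt_zeta2 hK.ne' hS.ne').const_mul α)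
  refine (((((hasDerivAt_id' S).const_mul α).mul_const (exp (-(r - r_R) * t))).fun_mul
    hΦ₁).fun_sub (hΦ₂.const_mul (α * K * exp (-r * t)))).congr_deriv ?_
  have hdiscount : exp (-r * t) * exp (r_R * t) = exp (-(r - r_R) * t) := by
    rw [← exp_add]; ring_nf
  have hstrike : K * (S / K) = S := mul_div_cancel₀ S hK.ne'
  rw [phi_zeta2 hσ hK ht hS]
  linear_combination (-(α ^ 2 * d * phi (zeta1 σ K r_R t S))) *
    (S * hdiscount + exp (-r * t) * exp (r_R * t) * hstrike)

lemma hasDerivAt_deriv_BS (hσ : σ ≠ 0) (hK : 0 < K) (hα : α ^ 2 = 1) (ht : 0 < t) (hS : 0 < S) :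
    HasDerivAt (deriv (BS σ K r r_R α t))
      (exp (-(r - r_R) * t) * phi (zeta1 σ K r_R t S) / (S * σ * √t)) S := by
  have hdelta : deriv (BS σ K r r_R α t)
      =ᶠ[𝓝 S] fun s => α * exp (-(r - r_R) * t) * Phi (α * zeta1 σ K r_R t s) := by
    filter_upwards [Ioi_mem_nhds hS] with s hs
    exact (hasDerivAt_BS hσ hK hα ht hs).deriv
  refine HasDerivAt.congr_of_eventuallyEq ?_ hdelta
  refine (((hasDerivAt_Phi _).comp S ((hasDerivAt_zeta1 hK.ne' hS.ne').const_mul α)).const_mul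
    (α * exp (-(r - r_R) * t))).congr_deriv ?_
  rw [phi_mul_of_sq_eq_one hα]
  linear_combination exp (-(r - r_R) * t) * phi (zeta1 σ K r_R t S) / (S * σ * √t) * hα

lemma tendsto_gamma_BS_atTop (hσ : 0 < σ) (hK : 0 < K) (ht : 0 < t) :
    Tendsto (fun S => exp (-(r - r_R) * t) * phi (zeta1 σ K r_R t S) / (S * σ * √t))
      atTop (𝓝 0) :=
  ((tendsto_phi_atTop.comp (tendsto_zeta1_atTop hσ hK ht)).const_mul _).div_atTop
    ((tendsto_id.atTop_mul_const hσ).atTop_mul_const (sqrt_pos.2 ht))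

end BlackScholes

/-- The gamma of the Black–Scholes formula is
`∂_{SS} 𝓑𝓢(t,S) = e^{−(r−r_R)t} φ(ζ₁)/(S σ √t)`, and consequently, for fixed
`t>0`, it tends to `0` as `S → ∞` (linearity boundary condition). -/
theorem BS_gamma_and_linearity
    (σ K r r_R α : ℝ) (hσ : 0 < σ) (hK : 0 < K) (hα : α = 1 ∨ α = -1) :
    (∀ t > (0 : ℝ), ∀ S > (0 : ℝ),
      deriv (deriv (fun s => BS σ K r r_R α t s)) S
        = Real.exp (-(r - r_R) * t) * phi (zeta1 σ K r_R t S)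
            / (S * σ * Real.sqrt t)) ∧
    (∀ t > (0 : ℝ),
      Filter.Tendsto (fun S => deriv (deriv (fun s => BS σ K r r_R α t s)) S)
        Filter.atTop (nhds 0)) := by
  have hα2 : α ^ 2 = 1 := by rcases hα with rfl | rfl <;> norm_num
  have hgamma : ∀ t > (0 : ℝ), ∀ S > (0 : ℝ), deriv (deriv (fun s => BS σ K r r_R α t s)) S
      = exp (-(r - r_R) * t) * phi (zeta1 σ K r_R t S) / (S * σ * √t) :=
    fun t ht S hS => (hasDerivAt_deriv_BS hσ.ne' hK hα2 ht hS).deriv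
  refine ⟨hgamma, fun t ht =>
    (tendsto_gamma_BS_atTop (r := r) (r_R := r_R) hσ hK ht).congr' ?_⟩
  filter_upwards [eventually_gt_atTop 0] with S hS
  exact (hgamma t ht S hS).symm
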